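/- arXiv:2512.10368 — 3 statements merged into one kernel-verified Lean document; each statement's English description precedes it below -/
import Mathlib

section
/- If φ is a holomorphic function on the open unit disk with Re φ(z) ≥ 0 for all z in the disk, then the function k(z,w) = (conj(φ(w)) + φ(z))/(1 - conj(w)·z) is a positive semidefinite kernel on 𝔻 × 𝔻; that is, for any finite collection of points λ₁,…,λₙ ∈ 𝔻 and scalars c₁,…,cₙ ∈ ℂ, the double sum ∑ᵢ∑ⱼ conj(cᵢ)·cⱼ·k(λⱼ, λᵢ) is a nonnegative real number. -/
open ComplexConjugate

open Complex MeasureTheory Metric Real Set Filter Topology intervalIntegral in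
private lemma herglotz_conj_int (g : ℝ → ℂ) :
    (∫ θ in (0:ℝ)..2*π, conj (g θ)) = conj (∫ θ in (0:ℝ)..2*π, g θ) := by
  rw [intervalIntegral, intervalIntegral, map_sub, ← integral_conj, ← integral_conj]

open Complex MeasureTheory Metric Real Set Filter Topology intervalIntegral in
set_option maxHeartbeats 2000000 in
private lemma herglotz_aux (ψ : ℂ → ℂ) (R : ℝ) (hR : 1 < R)
    (hψ : DifferentiableOn ℂ ψ (ball 0 R))
    (hre : ∀ z ∈ ball (0 : ℂ) R, 0 ≤ (ψ z).re)
    (n : ℕ) (l : Fin n → ℂ) (hl : ∀ i, l i ∈ ball (0 : ℂ) 1) (c : Fin n → ℂ) :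
    ∃ t : ℝ, 0 ≤ t ∧ (∑ i, ∑ j, conj (c i) * c j *
        ((conj (ψ (l i)) + ψ (l j)) / (1 - conj (l i) * l j))) = (t : ℂ) := by
  have hlnorm : ∀ i, ‖l i‖ < 1 := fun i => mem_ball_zero_iff.mp (hl i)
  set E : ℝ → ℂ := fun θ => circleMap 0 1 θ with hEdef
  have hEnorm : ∀ θ, ‖E θ‖ = 1 := by
    intro θ; simp [hEdef, norm_circleMap_zero]
  have hE0 : ∀ θ, E θ ≠ 0 := fun θ => by
    intro h; simpa [h] using hEnorm θ
  have hEconj : ∀ θ, conj (E θ) = (E θ)⁻¹ := fun θ => (Complex.inv_eq_conj (hEnorm θ)).symm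
  have hEball : ∀ θ, E θ ∈ ball (0:ℂ) R := fun θ => by
    rw [mem_ball_zero_iff, hEnorm]; exact hR
  set u : Fin n → ℝ → ℂ := fun j θ => (1 - l j * (E θ)⁻¹)⁻¹ with hudef
  have hu_ne : ∀ j θ, (1 - l j * (E θ)⁻¹) ≠ 0 := by
    intro j θ
    intro h
    have : l j * (E θ)⁻¹ = 1 := by linear_combination -h
    have : ‖l j * (E θ)⁻¹‖ = 1 := by rw [this, norm_one]
    rw [norm_mul, norm_inv, hEnorm, inv_one, mul_one] at this
    exact absurd this (ne_of_lt (hlnorm j))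
  have hcu : ∀ i θ, conj (u i θ) = (1 - conj (l i) * E θ)⁻¹ := by
    intro i θ
    simp only [hudef, map_inv₀, map_sub, map_one, map_mul, hEconj, inv_inv]
  have hEcont : Continuous E := continuous_circleMap 0 1
  have hψEcont : Continuous fun θ => ψ (E θ) := by
    rw [continuous_iff_continuousAt]
    intro θ
    exact ((hψ.differentiableAt (isOpen_ball.mem_nhds (hEball θ))).continuousAt).comp
      hEcont.continuousAt
  have hucont : ∀ j, Continuous (u j) := by
    intro j
    exact (continuous_const.sub (continuous_const.mul (hEcont.inv₀ hE0))).inv₀ (hu_ne j)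
  -- Claim 1
  have claim1 : ∀ i j, ψ (l j) / (1 - conj (l i) * l j)
      = (2*π)⁻¹ * ∫ θ in (0:ℝ)..2*π, ψ (E θ) * (u j θ * conj (u i θ)) := by
    intro i j
    set a : ℂ := conj (l i) with ha
    have hanorm : ‖a‖ < 1 := by rw [ha, RCLike.norm_conj]; exact hlnorm i
    set f : ℂ → ℂ := fun z => ψ z / (1 - a * z) with hf
    set U : Set ℂ := ball (0:ℂ) R ∩ {z | a * z ≠ 1} with hU
    have hUopen : IsOpen U := isOpen_ball.inter
      (isOpen_compl_singleton.preimage (continuous_const.mul continuous_id))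
    have hsub : closedBall (0:ℂ) 1 ⊆ U := by
      intro z hz
      rw [mem_closedBall_zero_iff] at hz
      constructor
      · rw [mem_ball_zero_iff]; exact lt_of_le_of_lt hz hR
      · intro h1
        have : ‖a * z‖ = 1 := by rw [h1, norm_one]
        rw [norm_mul] at this
        nlinarith [norm_nonneg (a*z), norm_nonneg z, norm_nonneg a]
    have hdenne : ∀ z ∈ U, (1 : ℂ) - a * z ≠ 0 := by
      intro z hz h
      exact hz.2 (by linear_combination -h)
    have hfd : DifferentiableOn ℂ f U := by
      apply DifferentiableOn.div (hψ.mono (by rw [hU]; exact inter_subset_left))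
      · exact (differentiableOn_const 1).sub
          ((differentiable_const a).mul differentiable_id).differentiableOn
      · exact hdenne
    have hDC : DiffContOnCl ℂ f (ball 0 1) :=
      ⟨hfd.mono (ball_subset_closedBall.trans hsub),
        hfd.continuousOn.mono (by rw [closure_ball (0:ℂ) one_ne_zero]; exact hsub)⟩
    have key := hDC.circleIntegral_sub_inv_smul (hl j)
    rw [circleIntegral] at key
    simp only [deriv_circleMap, smul_eq_mul] at key
    have hpt : ∀ θ : ℝ, circleMap 0 1 θ * I * ((circleMap 0 1 θ - l j)⁻¹ * f (circleMap 0 1 θ))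
        = I * (ψ (E θ) * (u j θ * conj (u i θ))) := by
      intro θ
      have h1 : E θ ≠ 0 := hE0 θ
      have h2 : E θ - l j ≠ 0 := by
        rw [sub_ne_zero]
        intro h
        have h5 := hEnorm θ
        rw [h] at h5
        exact (ne_of_lt (hlnorm j)) h5
      have h3 : (1:ℂ) - a * E θ ≠ 0 := by
        intro h
        have h1' : a * E θ = 1 := by linear_combination -h
        have : ‖a * E θ‖ = 1 := by rw [h1', norm_one]
        rw [norm_mul, hEnorm, mul_one] at this
        exact absurd this (ne_of_lt hanorm)
      have h4 := hu_ne j θ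
      have hE' : circleMap 0 1 θ = E θ := rfl
      rw [hE', hf, hudef, hcu]
      simp only
      field_simp
      ring
    rw [intervalIntegral.integral_congr (fun θ _ => hpt θ),
      intervalIntegral.integral_const_mul] at key
    have hI : (I : ℂ) ≠ 0 := I_ne_zero
    have hS : (∫ θ in (0:ℝ)..2*π, ψ (E θ) * (u j θ * conj (u i θ)))
        = 2*π * f (l j) := by
      apply mul_left_cancel₀ hI
      rw [key]; ring
    rw [hS, hf]
    simp only
    have hπ : (π : ℂ) ≠ 0 := by exact_mod_cast Real.pi_ne_zero
    push_cast
    field_simp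
  -- Claim 2
  have claim2 : ∀ i j, conj (ψ (l i)) / (1 - conj (l i) * l j)
      = (2*π)⁻¹ * ∫ θ in (0:ℝ)..2*π, conj (ψ (E θ)) * (u j θ * conj (u i θ)) := by
    intro i j
    have h := congrArg conj (claim1 j i)
    rw [map_div₀, map_sub, map_one, map_mul, Complex.conj_conj, map_mul,
      ← herglotz_conj_int] at h
    rw [Complex.conj_ofReal] at h
    rw [mul_comm (conj (l i)) (l j), h]
    congr 1
    apply intervalIntegral.integral_congr
    intro θ _
    simp only [map_mul, Complex.conj_conj]
    ring
  -- assembly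
  have hcontAB : ∀ i j : Fin n, Continuous fun θ =>
      conj (c i) * c j * ((conj (ψ (E θ)) + ψ (E θ)) * (u j θ * conj (u i θ))) := by
    intro i j
    exact continuous_const.mul
      (((Complex.continuous_conj.comp hψEcont).add hψEcont).mul
        ((hucont j).mul (Complex.continuous_conj.comp (hucont i))))
  have hintAB : ∀ i j : Fin n, IntervalIntegrable (fun θ =>
      conj (c i) * c j * ((conj (ψ (E θ)) + ψ (E θ)) * (u j θ * conj (u i θ))))
      MeasureTheory.volume 0 (2*π) := fun i j => (hcontAB i j).intervalIntegrable _ _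
  have hintA : ∀ i j : Fin n, IntervalIntegrable (fun θ =>
      conj (ψ (E θ)) * (u j θ * conj (u i θ))) MeasureTheory.volume 0 (2*π) := by
    intro i j
    exact (((Complex.continuous_conj.comp hψEcont)).mul
      ((hucont j).mul (Complex.continuous_conj.comp (hucont i)))).intervalIntegrable _ _
  have hintB : ∀ i j : Fin n, IntervalIntegrable (fun θ =>
      ψ (E θ) * (u j θ * conj (u i θ))) MeasureTheory.volume 0 (2*π) := by
    intro i j
    exact (hψEcont.mul
      ((hucont j).mul (Complex.continuous_conj.comp (hucont i)))).intervalIntegrable _ _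
  set F : ℝ → ℂ := fun θ => ∑ k, c k * u k θ with hF
  set G : ℝ → ℝ := fun θ => 2 * (ψ (E θ)).re * Complex.normSq (F θ) with hG
  refine ⟨(2*π)⁻¹ * ∫ θ in (0:ℝ)..2*π, G θ, ?_, ?_⟩
  · apply mul_nonneg (inv_nonneg.mpr (by positivity))
    apply intervalIntegral.integral_nonneg (by positivity)
    intro θ _
    rw [hG]
    have h1 := hre (E θ) (hEball θ)
    have h2 := Complex.normSq_nonneg (F θ)
    positivity
  · calc ∑ i, ∑ j, conj (c i) * c j * ((conj (ψ (l i)) + ψ (l j)) / (1 - conj (l i) * l j))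
        = ∑ i, ∑ j, ((2*π:ℝ) : ℂ)⁻¹ * ∫ θ in (0:ℝ)..2*π,
            conj (c i) * c j * ((conj (ψ (E θ)) + ψ (E θ)) * (u j θ * conj (u i θ))) := by
          refine Finset.sum_congr rfl fun i _ => Finset.sum_congr rfl fun j _ => ?_
          have e : ∀ θ, conj (c i) * c j * ((conj (ψ (E θ)) + ψ (E θ)) * (u j θ * conj (u i θ)))
              = conj (c i) * c j * (conj (ψ (E θ)) * (u j θ * conj (u i θ)))
                + conj (c i) * c j * (ψ (E θ) * (u j θ * conj (u i θ))) := by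
            intro θ; ring
          rw [intervalIntegral.integral_congr (fun θ _ => e θ),
            intervalIntegral.integral_add
              (by exact ((hintA i j).const_mul _)) (by exact ((hintB i j).const_mul _)),
            intervalIntegral.integral_const_mul, intervalIntegral.integral_const_mul,
            add_div, claim2 i j, claim1 i j]
          push_cast
          ring
      _ = ((2*π:ℝ) : ℂ)⁻¹ * ∫ θ in (0:ℝ)..2*π, ∑ i, ∑ j,
            conj (c i) * c j * ((conj (ψ (E θ)) + ψ (E θ)) * (u j θ * conj (u i θ))) := by
          have hswap : (∫ θ in (0:ℝ)..2*π, ∑ i, ∑ j,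
              conj (c i) * c j * ((conj (ψ (E θ)) + ψ (E θ)) * (u j θ * conj (u i θ))))
              = ∑ i, ∑ j, ∫ θ in (0:ℝ)..2*π,
              conj (c i) * c j * ((conj (ψ (E θ)) + ψ (E θ)) * (u j θ * conj (u i θ))) :=
            (intervalIntegral.integral_finset_sum
              (f := fun i θ => ∑ j, conj (c i) * c j *
                ((conj (ψ (E θ)) + ψ (E θ)) * (u j θ * conj (u i θ))))
              (fun i _ => ((continuous_finset_sum _ (fun j _ => hcontAB i j)).intervalIntegrable
                _ _))).trans
            (Finset.sum_congr rfl fun i _ =>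
              intervalIntegral.integral_finset_sum (fun j _ => hintAB i j))
          calc ∑ i, ∑ j, (((2*π:ℝ) : ℂ)⁻¹ * ∫ θ in (0:ℝ)..2*π,
                conj (c i) * c j * ((conj (ψ (E θ)) + ψ (E θ)) * (u j θ * conj (u i θ))))
              = ((2*π:ℝ) : ℂ)⁻¹ * ∑ i, ∑ j, ∫ θ in (0:ℝ)..2*π,
                conj (c i) * c j * ((conj (ψ (E θ)) + ψ (E θ)) * (u j θ * conj (u i θ))) := by
                rw [Finset.mul_sum]
                exact Finset.sum_congr rfl fun i _ => by rw [Finset.mul_sum]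
            _ = _ := congrArg (fun x => ((2*π:ℝ) : ℂ)⁻¹ * x) hswap.symm
      _ = ((2*π:ℝ) : ℂ)⁻¹ * ∫ θ in (0:ℝ)..2*π, ((G θ : ℝ) : ℂ) := by
          congr 1
          refine intervalIntegral.integral_congr fun θ _ => ?_
          have e1 : ∑ i, ∑ j, conj (c i) * c j *
                ((conj (ψ (E θ)) + ψ (E θ)) * (u j θ * conj (u i θ)))
              = (conj (ψ (E θ)) + ψ (E θ)) * ((∑ i, conj (c i * u i θ)) * (∑ j, c j * u j θ)) := by
            rw [Finset.sum_mul_sum, Finset.mul_sum]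
            refine Finset.sum_congr rfl fun i _ => ?_
            rw [Finset.mul_sum]
            refine Finset.sum_congr rfl fun j _ => ?_
            simp only [map_mul]
            ring
          rw [e1, ← map_sum, hG]
          simp only [hF]
          rw [add_comm (conj (ψ (E θ))), Complex.add_conj, mul_comm ((starRingEnd ℂ) _),
            Complex.mul_conj]
          push_cast
          ring
      _ = ((2*π)⁻¹ * ∫ θ in (0:ℝ)..2*π, G θ : ℝ) := by
          rw [intervalIntegral.integral_ofReal]
          push_cast
          ring

theorem stmt1 (φ : ℂ → ℂ) (hφ : DifferentiableOn ℂ φ (Metric.ball 0 1))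
    (hre : ∀ z ∈ Metric.ball (0 : ℂ) 1, 0 ≤ (φ z).re)
    (n : ℕ) (l : Fin n → ℂ) (hl : ∀ i, l i ∈ Metric.ball (0 : ℂ) 1) (c : Fin n → ℂ) :
    0 ≤ (∑ i, ∑ j, conj (c i) * c j *
        ((conj (φ (l i)) + φ (l j)) / (1 - conj (l i) * l j))).re ∧
    (∑ i, ∑ j, conj (c i) * c j *
        ((conj (φ (l i)) + φ (l j)) / (1 - conj (l i) * l j))).im = 0 := by
  have hlnorm : ∀ i, ‖l i‖ < 1 := fun i => mem_ball_zero_iff.mp (hl i)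
  set S : ℝ → ℂ := fun r => ∑ i, ∑ j, conj (c i) * c j *
      ((conj (φ ((r:ℂ) * l i)) + φ ((r:ℂ) * l j)) / (1 - conj (l i) * l j)) with hSdef
  have hSr : ∀ r : ℝ, r ∈ Set.Ioo (0:ℝ) 1 → 0 ≤ (S r).re ∧ (S r).im = 0 := by
    intro r hr
    obtain ⟨hr0, hr1⟩ := hr
    have hmaps : ∀ z ∈ Metric.ball (0:ℂ) r⁻¹, (r:ℂ) * z ∈ Metric.ball (0:ℂ) 1 := by
      intro z hz
      rw [mem_ball_zero_iff] at hz ⊢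
      rw [norm_mul, Complex.norm_real, Real.norm_eq_abs, abs_of_pos hr0]
      calc r * ‖z‖ < r * r⁻¹ := by exact (mul_lt_mul_iff_right₀ hr0).mpr hz
        _ = 1 := mul_inv_cancel₀ (ne_of_gt hr0)
    have hψ : DifferentiableOn ℂ (fun z => φ ((r:ℂ) * z)) (Metric.ball 0 r⁻¹) := by
      apply DifferentiableOn.comp hφ
        (((differentiable_const ((r:ℂ))).mul differentiable_id).differentiableOn)
      exact hmaps
    have hre' : ∀ z ∈ Metric.ball (0:ℂ) r⁻¹, 0 ≤ ((fun z => φ ((r:ℂ) * z)) z).re :=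
      fun z hz => hre _ (hmaps z hz)
    obtain ⟨t, ht0, htS⟩ := herglotz_aux (fun z => φ ((r:ℂ) * z)) r⁻¹
      ((one_lt_inv₀ hr0).mpr hr1) hψ hre' n l hl c
    have hSt : S r = (t : ℂ) := htS
    rw [hSt]
    simp [ht0]
  have hφc : ∀ k : Fin n, Filter.Tendsto (fun r : ℝ => φ ((r:ℂ) * l k))
      (nhdsWithin (1:ℝ) (Set.Iio 1)) (nhds (φ (l k))) := by
    intro k
    have h1 : ContinuousAt φ (l k) :=
      (hφ.differentiableAt (Metric.isOpen_ball.mem_nhds (hl k))).continuousAt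
    have h2 : Filter.Tendsto (fun r : ℝ => (r:ℂ) * l k)
        (nhdsWithin (1:ℝ) (Set.Iio 1)) (nhds (l k)) := by
      have h3 : Filter.Tendsto (fun r : ℝ => (r:ℂ) * l k) (nhds (1:ℝ))
          (nhds (((1:ℝ):ℂ) * l k)) :=
        (Complex.continuous_ofReal.mul continuous_const).tendsto (1:ℝ)
      simp only [Complex.ofReal_one, one_mul] at h3
      exact h3.mono_left nhdsWithin_le_nhds
    exact h1.tendsto.comp h2
  have hTend : Filter.Tendsto S (nhdsWithin (1:ℝ) (Set.Iio 1))
      (nhds (∑ i, ∑ j, conj (c i) * c j *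
        ((conj (φ (l i)) + φ (l j)) / (1 - conj (l i) * l j)))) := by
    apply tendsto_finset_sum
    intro i _
    apply tendsto_finset_sum
    intro j _
    exact Filter.Tendsto.const_mul _
      ((((Complex.continuous_conj.tendsto _).comp (hφc i)).add (hφc j)).div_const _)
  have hev : ∀ᶠ r in nhdsWithin (1:ℝ) (Set.Iio 1), r ∈ Set.Ioo (0:ℝ) 1 :=
    Filter.eventually_of_mem (Ioo_mem_nhdsLT_of_mem ⟨zero_lt_one, le_refl 1⟩) (fun r hr => hr)
  constructor
  · have h1 := (Complex.continuous_re.tendsto _).comp hTend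
    exact ge_of_tendsto h1 (hev.mono fun r hr => (hSr r hr).1)
  · have h1 := (Complex.continuous_im.tendsto _).comp hTend
    have h2 : Filter.Tendsto (fun r => (S r).im) (nhdsWithin (1:ℝ) (Set.Iio 1)) (nhds 0) :=
      Filter.Tendsto.congr' ((hev.mono fun r hr => ((hSr r hr).2).symm)) tendsto_const_nhds
    exact tendsto_nhds_unique h1 h2
end

section
/- If φ is a holomorphic self-map of the upper half-plane ℍ = {z : Im z > 0}, then the function k(z,w) = (φ(z) - conj(φ(w)))/(z - conj(w)) is a positive semidefinite kernel on ℍ × ℍ. -/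
open ComplexConjugate Complex Metric Real Filter Topology

lemma reproducing {h : ℂ → ℂ} (hh : DiffContOnCl ℂ h (ball (0:ℂ) 1))
    {w : ℂ} (hw : ‖w‖ < 1) :
    ∫ θ in (0:ℝ)..(2*π), conj ((1 - circleMap 0 1 θ * conj w)⁻¹) * h (circleMap 0 1 θ)
      = 2 * π * h w := by
  have key := hh.circleIntegral_sub_inv_smul (w := w) (by simpa [mem_ball] using hw)
  rw [circleIntegral] at key
  have e1 : ∀ θ : ℝ, deriv (circleMap 0 1) θ • ((circleMap 0 1 θ - w)⁻¹ • h (circleMap 0 1 θ))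
      = I * (conj ((1 - circleMap 0 1 θ * conj w)⁻¹) * h (circleMap 0 1 θ)) := by
    intro θ
    have hne : circleMap 0 1 θ ≠ 0 := circleMap_ne_center one_ne_zero
    have hinv : (circleMap 0 1 θ)⁻¹ = conj (circleMap 0 1 θ) := by
      rw [Complex.inv_def]
      simp [Complex.normSq_eq_norm_sq, norm_circleMap_zero]
    have : conj ((1 - circleMap 0 1 θ * conj w)⁻¹)
        = circleMap 0 1 θ * (circleMap 0 1 θ - w)⁻¹ := by
      rw [map_inv₀]
      simp only [map_sub, map_one, map_mul, Complex.conj_conj, ← hinv]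
      have h2 : circleMap 0 1 θ - w ≠ 0 := by
        intro hc
        have : ‖circleMap 0 1 θ‖ = 1 := by
          simpa using abs_circleMap_zero 1 θ
        rw [sub_eq_zero] at hc
        rw [hc] at this
        exact absurd this (by linarith)
      field_simp
    rw [deriv_circleMap, this]
    simp only [smul_eq_mul]
    ring
  simp only [e1] at key
  rw [intervalIntegral.integral_const_mul] at key
  have : (2 * π * I : ℂ) • h w = I * (2 * π * h w) := by
    simp [smul_eq_mul]; ring
  rw [this] at key
  exact mul_left_cancel₀ I_ne_zero key

lemma one_sub_ne {z w : ℂ} (hz : ‖z‖ ≤ 1) (hw : ‖w‖ < 1) : 1 - z * conj w ≠ 0 := by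
  intro hc
  rw [sub_eq_zero] at hc
  have : ‖z * conj w‖ < 1 := by
    rw [norm_mul, RCLike.norm_conj]
    nlinarith [norm_nonneg z, norm_nonneg w]
  rw [← hc] at this
  simp at this

lemma cont_comp {χ : ℂ → ℂ} (hχ : ContinuousOn χ (closure (ball (0:ℂ) 1))) :
    Continuous (fun θ : ℝ => χ (circleMap 0 1 θ)) := by
  apply hχ.comp_continuous (continuous_circleMap 0 1)
  intro θ
  rw [closure_ball (0:ℂ) one_ne_zero]
  exact circleMap_mem_closedBall 0 zero_le_one θ

lemma cont_kern {w : ℂ} (hw : ‖w‖ < 1) :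
    Continuous (fun θ : ℝ => ((1 : ℂ) - circleMap 0 1 θ * conj w)⁻¹) := by
  apply Continuous.inv₀
  · exact continuous_const.sub ((continuous_circleMap 0 1).mul continuous_const)
  · intro θ
    exact one_sub_ne (by simp [norm_circleMap_zero]) hw

lemma iconj (f : ℝ → ℂ) : (∫ θ in (0:ℝ)..(2*π), conj (f θ)) = conj (∫ θ in (0:ℝ)..(2*π), f θ) := by
  rw [intervalIntegral, intervalIntegral, integral_conj,
    integral_conj, map_sub]

lemma int_sum {n : ℕ} {μ : Fin n → ℂ} (hμ : ∀ i, ‖μ i‖ < 1) (b : Fin n → ℂ)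
    {χ : ℂ → ℂ} (hχ : DiffContOnCl ℂ χ (ball (0:ℂ) 1)) :
    (∫ θ in (0:ℝ)..(2*π),
        conj (∑ j, b j * (1 - circleMap 0 1 θ * conj (μ j))⁻¹) * χ (circleMap 0 1 θ))
      = 2 * π * ∑ j, conj (b j) * χ (μ j) := by
  have : ∀ θ : ℝ, conj (∑ j, b j * (1 - circleMap 0 1 θ * conj (μ j))⁻¹) * χ (circleMap 0 1 θ)
      = ∑ j, conj (b j) * (conj ((1 - circleMap 0 1 θ * conj (μ j))⁻¹) * χ (circleMap 0 1 θ)) := by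
    intro θ
    rw [map_sum, Finset.sum_mul]
    exact Finset.sum_congr rfl fun j _ => by rw [map_mul]; ring
  simp only [this]
  rw [intervalIntegral.integral_finset_sum]
  · rw [Finset.mul_sum]
    refine Finset.sum_congr rfl fun j _ => ?_
    rw [intervalIntegral.integral_const_mul, reproducing hχ (hμ j)]
    ring
  · intro j _
    exact (continuous_const.mul ((Complex.continuous_conj.comp (cont_kern (hμ j))).mul
      (cont_comp hχ.continuousOn))).intervalIntegrable _ _

lemma hker_diff {n : ℕ} {μ : Fin n → ℂ} (hμ : ∀ i, ‖μ i‖ < 1) (b : Fin n → ℂ) :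
    DiffContOnCl ℂ (fun z => ∑ j, b j * (1 - z * conj (μ j))⁻¹) (ball (0:ℂ) 1) := by
  apply DifferentiableOn.diffContOnCl
  refine DifferentiableOn.fun_sum fun j _ => (differentiableOn_const _).mul ?_
  refine DifferentiableOn.inv
    ((differentiableOn_const 1).sub ((differentiable_id.mul_const _).differentiableOn)) ?_
  intro z hz
  rw [closure_ball (0:ℂ) one_ne_zero, mem_closedBall_zero_iff] at hz
  exact one_sub_ne hz (hμ j)

lemma disk_pick {ψ : ℂ → ℂ} (hψ : DiffContOnCl ℂ ψ (ball (0:ℂ) 1))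
    (hb : ∀ θ : ℝ, ‖ψ (circleMap 0 1 θ)‖ ≤ 1)
    {n : ℕ} {μ : Fin n → ℂ} (hμ : ∀ i, ‖μ i‖ < 1) (a : Fin n → ℂ) :
    ∃ t : ℝ, 0 ≤ t ∧ (∑ i, ∑ j, conj (a i) * a j *
      ((1 - ψ (μ j) * conj (ψ (μ i))) / (1 - μ j * conj (μ i)))) = (t : ℂ) := by
  classical
  set c1 : Fin n → ℂ := fun j => conj (a j) with hc1
  set c2 : Fin n → ℂ := fun j => conj (a j * ψ (μ j)) with hc2
  set F : ℝ → ℂ := fun θ => ∑ j, c1 j * (1 - circleMap 0 1 θ * conj (μ j))⁻¹ with hF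
  set G : ℝ → ℂ := fun θ => ∑ j, c2 j * (1 - circleMap 0 1 θ * conj (μ j))⁻¹ with hG
  set u : ℝ → ℂ := fun θ => ψ (circleMap 0 1 θ) * G θ with hu
  set T1 : ℂ := ∑ j, a j * ∑ i, c1 i * (1 - μ j * conj (μ i))⁻¹ with hT1
  set T2 : ℂ := ∑ j, (a j * ψ (μ j)) * ∑ i, c2 i * (1 - μ j * conj (μ i))⁻¹ with hT2
  have hcF : Continuous F := by
    rw [hF]
    exact continuous_finset_sum _ fun j _ => continuous_const.mul (cont_kern (hμ j))
  have hcG : Continuous G := by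
    rw [hG]
    exact continuous_finset_sum _ fun j _ => continuous_const.mul (cont_kern (hμ j))
  have hcu : Continuous u := by
    rw [hu]
    exact (cont_comp hψ.continuousOn).mul hcG
  have E1 : (∫ θ in (0:ℝ)..(2*π), conj (F θ) * F θ) = 2 * π * T1 := by
    have h := int_sum hμ c1 (hker_diff hμ c1)
    simp only [hc1, Complex.conj_conj] at h
    simp only [hF, hT1, hc1, Complex.conj_conj]
    exact h
  have E2 : (∫ θ in (0:ℝ)..(2*π), conj (G θ) * G θ) = 2 * π * T2 := by
    have h := int_sum hμ c2 (hker_diff hμ c2)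
    simp only [hc2, Complex.conj_conj] at h
    simp only [hG, hT2, hc2, Complex.conj_conj]
    exact h
  have E3 : (∫ θ in (0:ℝ)..(2*π), conj (F θ) * u θ) = 2 * π * T2 := by
    have hd : DiffContOnCl ℂ (fun z => ψ z * ∑ j, c2 j * (1 - z * conj (μ j))⁻¹)
        (ball (0:ℂ) 1) :=
      ⟨hψ.differentiableOn.mul (hker_diff hμ c2).differentiableOn,
        hψ.continuousOn.mul (hker_diff hμ c2).continuousOn⟩
    have h := int_sum hμ c1 hd
    simp only [hc1, Complex.conj_conj] at h
    simp only [hF, hG, hu, hT2, hc1, Complex.conj_conj]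
    refine h.trans ?_
    congr 1
    exact Finset.sum_congr rfl fun j _ => by ring
  set X : ℝ := ∫ θ in (0:ℝ)..(2*π), normSq (G θ) with hX
  set Y : ℝ := ∫ θ in (0:ℝ)..(2*π), normSq (F θ) with hY
  set Z : ℝ := ∫ θ in (0:ℝ)..(2*π), normSq (u θ) with hZ
  set W : ℝ := ∫ θ in (0:ℝ)..(2*π), normSq (u θ - F θ) with hW
  have nsq : ∀ z : ℂ, conj z * z = (normSq z : ℂ) := fun z => by rw [mul_comm, Complex.mul_conj]
  have hXC : (X : ℂ) = 2 * π * T2 := by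
    rw [← E2]
    simp only [nsq]
    rw [intervalIntegral.integral_ofReal]
  have hYC : (Y : ℂ) = 2 * π * T1 := by
    rw [← E1]; simp only [nsq]; rw [intervalIntegral.integral_ofReal]
  have hZX : Z ≤ X := by
    apply intervalIntegral.integral_mono_on (by positivity)
      ((Complex.continuous_normSq.comp hcu).intervalIntegrable _ _)
      ((Complex.continuous_normSq.comp hcG).intervalIntegrable _ _)
    intro θ _
    show normSq (u θ) ≤ normSq (G θ)
    rw [hu]
    simp only [normSq_mul]
    have h1 : normSq (ψ (circleMap 0 1 θ)) ≤ 1 := by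
      have := hb θ
      rw [← Complex.sq_norm]
      nlinarith [norm_nonneg (ψ (circleMap 0 1 θ))]
    nlinarith [normSq_nonneg (G θ), normSq_nonneg (ψ (circleMap 0 1 θ))]
  have hW0 : 0 ≤ W := by
    apply intervalIntegral.integral_nonneg (by positivity)
    intro θ _
    exact normSq_nonneg _
  -- conj integral of E3
  have iconj : ∀ f : ℝ → ℂ, (∫ θ in (0:ℝ)..(2*π), conj (f θ)) = conj (∫ θ in (0:ℝ)..(2*π), f θ) := by
    intro f
    rw [intervalIntegral, intervalIntegral, integral_conj, integral_conj, map_sub]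
  have E3' : (∫ θ in (0:ℝ)..(2*π), conj (u θ) * F θ) = 2 * π * T2 := by
    have : ∀ θ : ℝ, conj (u θ) * F θ = conj (conj (F θ) * u θ) := by
      intro θ; simp only [map_mul, Complex.conj_conj]; ring
    simp only [this]
    rw [iconj, E3, ← hXC]
    rw [← hXC] at *
    simp [Complex.conj_ofReal]
  have hXC2 : (X:ℂ) = 2 * π * T2 := hXC
  -- expansion of W
  have hWexp : (W : ℂ) = (Z : ℂ) - (X : ℂ) - (X : ℂ) + (Y : ℂ) := by
    have pt : ∀ θ : ℝ, (normSq (u θ - F θ) : ℂ)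
        = conj (u θ) * u θ - conj (u θ) * F θ - conj (F θ) * u θ + conj (F θ) * F θ := by
      intro θ
      rw [← nsq]
      simp only [map_sub]
      ring
    rw [hW, ← intervalIntegral.integral_ofReal]
    simp only [pt]
    have i1 := (((Complex.continuous_conj.comp hcu).mul hcu)).intervalIntegrable
      (μ := MeasureTheory.volume) 0 (2*π)
    have i2 := (((Complex.continuous_conj.comp hcu).mul hcF)).intervalIntegrable
      (μ := MeasureTheory.volume) 0 (2*π)
    have i3 := (((Complex.continuous_conj.comp hcF).mul hcu)).intervalIntegrable
      (μ := MeasureTheory.volume) 0 (2*π)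
    have i4 := (((Complex.continuous_conj.comp hcF).mul hcF)).intervalIntegrable
      (μ := MeasureTheory.volume) 0 (2*π)
    simp only [Function.comp_def, Pi.mul_def] at i1 i2 i3 i4
    rw [intervalIntegral.integral_add ((i1.sub i2).sub i3) i4,
        intervalIntegral.integral_sub (i1.sub i2) i3,
        intervalIntegral.integral_sub i1 i2]
    have hZC : (∫ θ in (0:ℝ)..(2*π), conj (u θ) * u θ) = (Z : ℂ) := by
      simp only [nsq]; rw [intervalIntegral.integral_ofReal]
    have hYC' : (∫ θ in (0:ℝ)..(2*π), conj (F θ) * F θ) = (Y : ℂ) := by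
      simp only [nsq]; rw [intervalIntegral.integral_ofReal]
    rw [hZC, hYC', E3', E3, ← hXC]
  have hWr : W = Z - X - X + Y := by exact_mod_cast hWexp
  have hXY : X ≤ Y := by linarith
  -- final algebra
  have hS : (∑ i, ∑ j, conj (a i) * a j *
      ((1 - ψ (μ j) * conj (ψ (μ i))) / (1 - μ j * conj (μ i)))) = T1 - T2 := by
    rw [Finset.sum_comm, hT1, hT2, ← Finset.sum_sub_distrib]
    refine Finset.sum_congr rfl fun j _ => ?_
    rw [Finset.mul_sum, Finset.mul_sum, ← Finset.sum_sub_distrib]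
    refine Finset.sum_congr rfl fun i _ => ?_
    simp only [hc1, hc2, div_eq_mul_inv, map_mul]
    ring
  have h2pi : (2 * (π:ℂ)) ≠ 0 := by
    simp [Real.pi_ne_zero]
  have key : 2 * (π:ℂ) * (T1 - T2) = (Y:ℂ) - (X:ℂ) := by rw [mul_sub, ← hYC, ← hXC]
  refine ⟨(Y - X) / (2 * π), div_nonneg (by linarith) (by positivity), ?_⟩
  rw [hS]
  push_cast
  rw [eq_div_iff h2pi, ← key]
  ring

lemma add_I_ne {z : ℂ} (hz : 0 < z.im) : z + I ≠ 0 := by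
  intro h
  have := congrArg Complex.im h
  simp at this
  linarith

lemma sub_conj_ne {z w : ℂ} (hz : 0 < z.im) (hw : 0 < w.im) : z - conj w ≠ 0 := by
  intro h
  have := congrArg Complex.im h
  simp [Complex.sub_im, Complex.conj_im] at this
  linarith

lemma cayley_norm_lt {z : ℂ} (hz : 0 < z.im) : ‖(z - I)/(z + I)‖ < 1 := by
  have hden : z + I ≠ 0 := add_I_ne hz
  rw [norm_div, div_lt_one (norm_pos_iff.2 hden), ← Real.sqrt_sq (norm_nonneg (z - I)),
    ← Real.sqrt_sq (norm_nonneg (z + I))]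
  apply Real.sqrt_lt_sqrt (by positivity)
  rw [Complex.sq_norm, Complex.sq_norm]
  simp [Complex.normSq_apply]
  nlinarith

lemma cayley_inv_im {ζ : ℂ} (hζ : ‖ζ‖ < 1) : 0 < (I * (1 + ζ) / (1 - ζ)).im := by
  have h1 : (1:ℂ) - ζ ≠ 0 := by
    intro h
    rw [sub_eq_zero] at h
    rw [← h] at hζ
    simp at hζ
  have h2 : Complex.normSq ζ < 1 := by
    rw [← Complex.sq_norm]
    nlinarith [norm_nonneg ζ]
  have h3 : 0 < Complex.normSq (1 - ζ) := Complex.normSq_pos.2 h1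
  rw [Complex.div_im]
  rw [Complex.normSq_apply] at h2 h3 ⊢
  simp [Complex.normSq_apply] at h3 ⊢
  rw [div_lt_div_iff_of_pos_right (by nlinarith)]
  nlinarith

lemma cayley_left_inv {z : ℂ} (hz : 0 < z.im) :
    I * (1 + (z - I)/(z + I)) / (1 - (z - I)/(z + I)) = z := by
  have hden : z + I ≠ 0 := add_I_ne hz
  have h1 : (1:ℂ) - (z - I)/(z + I) = 2*I/(z+I) := by
    field_simp
    ring
  have h2 : (1:ℂ) + (z - I)/(z + I) = 2*z/(z+I) := by
    field_simp
    ring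
  rw [h1, h2]
  field_simp

lemma cayley_term {z w fz fw : ℂ} (hz : 0 < z.im) (hw : 0 < w.im)
    (hfz : 0 < fz.im) (hfw : 0 < fw.im) :
    ((fz + I)/(z + I)) * conj ((fw + I)/(w + I)) *
      ((1 - ((fz - I)/(fz + I)) * conj ((fw - I)/(fw + I))) /
        (1 - ((z - I)/(z + I)) * conj ((w - I)/(w + I))))
    = (fz - conj fw) / (z - conj w) := by
  have hzI : z + I ≠ 0 := add_I_ne hz
  have hwI : w + I ≠ 0 := add_I_ne hw
  have hfzI : fz + I ≠ 0 := add_I_ne hfz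
  have hfwI : fw + I ≠ 0 := add_I_ne hfw
  have hwIc : conj w - I ≠ 0 := by
    intro h
    apply hwI
    have : conj (w + I) = 0 := by rw [map_add, Complex.conj_I]; exact h
    simpa using congrArg conj this
  have hfwIc : conj fw - I ≠ 0 := by
    intro h
    apply hfwI
    have : conj (fw + I) = 0 := by rw [map_add, Complex.conj_I]; exact h
    simpa using congrArg conj this
  have hzw : z - conj w ≠ 0 := sub_conj_ne hz hw
  have hfzw : fz - conj fw ≠ 0 := sub_conj_ne hfz hfw
  have e1 : conj ((fw + I)/(w + I)) = (conj fw - I)/(conj w - I) := by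
    rw [map_div₀, map_add, map_add, Complex.conj_I]
    ring_nf
  have e2 : conj ((fw - I)/(fw + I)) = (conj fw + I)/(conj fw - I) := by
    rw [map_div₀, map_sub, map_add, Complex.conj_I]
    ring_nf
  have e3 : conj ((w - I)/(w + I)) = (conj w + I)/(conj w - I) := by
    rw [map_div₀, map_sub, map_add, Complex.conj_I]
    ring_nf
  rw [e1, e2, e3]
  have d1 : (1:ℂ) - ((z - I)/(z + I)) * ((conj w + I)/(conj w - I))
      = (-2*I*(z - conj w)) / ((z+I)*(conj w - I)) := by
    field_simp
    ring
  have d2 : (1:ℂ) - ((fz - I)/(fz + I)) * ((conj fw + I)/(conj fw - I))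
      = (-2*I*(fz - conj fw)) / ((fz+I)*(conj fw - I)) := by
    field_simp
    ring
  rw [d1, d2, div_div_div_eq, div_mul_div_comm, div_mul_div_comm]
  rw [div_eq_div_iff (by simp [mul_eq_zero, hzI, hwIc, hfzI, hfwIc, hzw,
    Complex.I_ne_zero, sub_eq_zero]) hzw]
  ring

lemma disk_pick' {ψ : ℂ → ℂ} (hψ : DifferentiableOn ℂ ψ (ball (0:ℂ) 1))
    (hm : ∀ z ∈ ball (0:ℂ) 1, ψ z ∈ ball (0:ℂ) 1)
    {n : ℕ} {μ : Fin n → ℂ} (hμ : ∀ i, ‖μ i‖ < 1) (a : Fin n → ℂ) :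
    ∃ t : ℝ, 0 ≤ t ∧ (∑ i, ∑ j, conj (a i) * a j *
      ((1 - ψ (μ j) * conj (ψ (μ i))) / (1 - μ j * conj (μ i)))) = (t : ℂ) := by
  set S : ℂ := ∑ i, ∑ j, conj (a i) * a j *
      ((1 - ψ (μ j) * conj (ψ (μ i))) / (1 - μ j * conj (μ i))) with hSdef
  set Φ : ℝ → ℂ := fun r => ∑ i, ∑ j, conj (a i) * a j *
      ((1 - ψ ((r:ℂ) * μ j) * conj (ψ ((r:ℂ) * μ i))) / (1 - μ j * conj (μ i))) with hΦdef
  have claim1 : ∀ r : ℝ, r ∈ Set.Ioo (0:ℝ) 1 → 0 ≤ (Φ r).re ∧ (Φ r).im = 0 := by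
    intro r hr
    have hmaps : ∀ z : ℂ, z ∈ closure (ball (0:ℂ) 1) → (r:ℂ) * z ∈ ball (0:ℂ) 1 := by
      intro z hz
      rw [closure_ball (0:ℂ) one_ne_zero, mem_closedBall_zero_iff] at hz
      rw [mem_ball_zero_iff, norm_mul, Complex.norm_real, Real.norm_eq_abs,
        abs_of_pos hr.1]
      nlinarith [hr.1, hr.2, norm_nonneg z]
    have hd : DiffContOnCl ℂ (fun z => ψ ((r:ℂ) * z)) (ball (0:ℂ) 1) := by
      apply DifferentiableOn.diffContOnCl
      apply DifferentiableOn.comp (t := ball (0:ℂ) 1) hψ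
        ((differentiable_const _).mul differentiable_id).differentiableOn
      intro z hz
      exact hmaps z hz
    have hb : ∀ θ : ℝ, ‖ψ ((r:ℂ) * circleMap 0 1 θ)‖ ≤ 1 := by
      intro θ
      have h1 : (r:ℂ) * circleMap 0 1 θ ∈ ball (0:ℂ) 1 := by
        apply hmaps
        rw [closure_ball (0:ℂ) one_ne_zero]
        exact circleMap_mem_closedBall 0 zero_le_one θ
      have := hm _ h1
      rw [mem_ball_zero_iff] at this
      exact this.le
    obtain ⟨t, ht0, ht⟩ := disk_pick hd hb hμ a
    have : Φ r = (t : ℂ) := ht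
    rw [this]
    simp [ht0]
  have claim2 : Tendsto Φ (𝓝[<] (1:ℝ)) (𝓝 S) := by
    have base : ∀ i : Fin n, Tendsto (fun r : ℝ => ψ ((r:ℂ) * μ i)) (𝓝[<] (1:ℝ))
        (𝓝 (ψ (μ i))) := by
      intro i
      have hc : ContinuousAt ψ (μ i) :=
        hψ.continuousOn.continuousAt (isOpen_ball.mem_nhds (mem_ball_zero_iff.2 (hμ i)))
      have h2 : Tendsto (fun r : ℝ => (r:ℂ) * μ i) (𝓝 (1:ℝ)) (𝓝 (μ i)) := by
        have h := (Complex.continuous_ofReal.mul (continuous_const (y := μ i))).tendsto (1:ℝ)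
        simpa [Pi.mul_def] using h
      exact (hc.tendsto.comp h2).mono_left nhdsWithin_le_nhds
    rw [hΦdef, hSdef]
    apply tendsto_finset_sum
    intro i _
    apply tendsto_finset_sum
    intro j _
    exact tendsto_const_nhds.mul ((((base j).mul
      ((Complex.continuous_conj.tendsto _).comp (base i))).const_sub 1).div_const _)
  have hC : IsClosed {z : ℂ | 0 ≤ z.re ∧ z.im = 0} := by
    apply IsClosed.inter
    · exact isClosed_Ici.preimage Complex.continuous_re
    · exact (isClosed_singleton (x := (0:ℝ))).preimage Complex.continuous_im
  have hev : ∀ᶠ r in 𝓝[<] (1:ℝ), Φ r ∈ {z : ℂ | 0 ≤ z.re ∧ z.im = 0} := by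
    have h1 : ∀ᶠ r in 𝓝[<] (1:ℝ), r ∈ Set.Ioi (0:ℝ) :=
      eventually_nhdsWithin_of_eventually_nhds (isOpen_Ioi.eventually_mem (Set.mem_Ioi.2 one_pos))
    have h2 : ∀ᶠ r in 𝓝[<] (1:ℝ), r < 1 := eventually_mem_nhdsWithin
    filter_upwards [h1, h2] with r hr1 hr2
    exact claim1 r ⟨hr1, hr2⟩
  have hS : S ∈ {z : ℂ | 0 ≤ z.re ∧ z.im = 0} := hC.mem_of_tendsto claim2 hev
  refine ⟨S.re, hS.1, ?_⟩
  apply Complex.ext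
  · simp
  · simp [hS.2]


theorem stmt2 (φ : ℂ → ℂ) (hφ : DifferentiableOn ℂ φ {z : ℂ | 0 < z.im})
    (hφm : ∀ z ∈ {z : ℂ | 0 < z.im}, φ z ∈ {z : ℂ | 0 < z.im})
    (n : ℕ) (l : Fin n → ℂ) (hl : ∀ i, 0 < (l i).im) (c : Fin n → ℂ) :
    0 ≤ (∑ i, ∑ j, conj (c i) * c j *
        ((φ (l j) - conj (φ (l i))) / (l j - conj (l i)))).re ∧
    (∑ i, ∑ j, conj (c i) * c j *
        ((φ (l j) - conj (φ (l i))) / (l j - conj (l i)))).im = 0 := by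
  classical
  set μ : Fin n → ℂ := fun i => (l i - Complex.I)/(l i + Complex.I) with hμdef
  set a : Fin n → ℂ := fun i => c i * ((φ (l i) + Complex.I)/(l i + Complex.I)) with hadef
  set iC : ℂ → ℂ := fun ζ => Complex.I * (1 + ζ) / (1 - ζ) with hiCdef
  set ψ : ℂ → ℂ := fun ζ => (φ (iC ζ) - Complex.I)/(φ (iC ζ) + Complex.I) with hψdef
  have him : ∀ i, 0 < (φ (l i)).im := fun i => hφm _ (hl i)
  have hμn : ∀ i, ‖μ i‖ < 1 := fun i => cayley_norm_lt (hl i)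
  have hiCmaps : ∀ ζ ∈ Metric.ball (0:ℂ) 1, 0 < (iC ζ).im := by
    intro ζ hζ
    exact cayley_inv_im (mem_ball_zero_iff.1 hζ)
  have hiCd : DifferentiableOn ℂ iC (Metric.ball (0:ℂ) 1) := by
    rw [hiCdef]
    apply DifferentiableOn.div
      (((differentiable_const _).mul ((differentiable_const (1:ℂ)).add differentiable_id)).differentiableOn)
      (((differentiable_const (1:ℂ)).sub differentiable_id).differentiableOn)
    intro ζ hζ
    intro h
    rw [Pi.sub_apply] at h
    rw [sub_eq_zero] at h
    simp only [id] at h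
    rw [mem_ball_zero_iff, ← h] at hζ
    simp at hζ
  have hψd : DifferentiableOn ℂ ψ (Metric.ball (0:ℂ) 1) := by
    rw [hψdef]
    have houter : DifferentiableOn ℂ (fun u : ℂ => (u - Complex.I)/(u + Complex.I))
        {z : ℂ | 0 < z.im} := by
      apply DifferentiableOn.div
        ((differentiable_id.sub (differentiable_const _)).differentiableOn)
        ((differentiable_id.add (differentiable_const _)).differentiableOn)
      intro u hu
      exact add_I_ne hu
    have hmid : DifferentiableOn ℂ (fun ζ => φ (iC ζ)) (Metric.ball (0:ℂ) 1) :=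
      DifferentiableOn.comp hφ hiCd (fun ζ hζ => hiCmaps ζ hζ)
    exact DifferentiableOn.comp houter hmid (fun ζ hζ => hφm _ (hiCmaps ζ hζ))
  have hm : ∀ ζ ∈ Metric.ball (0:ℂ) 1, ψ ζ ∈ Metric.ball (0:ℂ) 1 := by
    intro ζ hζ
    rw [hψdef, mem_ball_zero_iff]
    exact cayley_norm_lt (hφm _ (hiCmaps ζ hζ))
  have hkey : ∀ i, ψ (μ i) = (φ (l i) - Complex.I)/(φ (l i) + Complex.I) := by
    intro i
    have : iC (μ i) = l i := cayley_left_inv (hl i)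
    rw [hψdef]
    simp only [this]
  obtain ⟨t, ht0, htS⟩ := disk_pick' hψd hm hμn a
  have hEq : (∑ i, ∑ j, conj (c i) * c j *
        ((φ (l j) - conj (φ (l i))) / (l j - conj (l i))))
      = ∑ i, ∑ j, conj (a i) * a j *
        ((1 - ψ (μ j) * conj (ψ (μ i))) / (1 - μ j * conj (μ i))) := by
    refine Finset.sum_congr rfl fun i _ => Finset.sum_congr rfl fun j _ => ?_
    rw [hkey i, hkey j, hadef, hμdef]
    have hct := cayley_term (hl j) (hl i) (him j) (him i)
    rw [← hct]
    simp only [map_mul]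
    ring
  constructor
  · rw [hEq, htS]
    simpa using ht0
  · rw [hEq, htS]
    simp
end

section
/- Let B_t(z) = √(z² - 2(t-a)) for t ≥ a ≥ 0 (upper half-plane branch). Then for any α, z in the upper half-plane and b ≥ a, ∫_a^b dt/(conj(B_t(α))·B_t(z)) = log[ (B_b(z) - conj(B_b(α)))/(z - conj(α)) ], i.e., exp(∫_a^b dt/(conj(B_t(α))·B_t(z))) = (B_b(z) - conj(B_b(α)))/(z - conj(α)). -/
open Complex ComplexConjugate Set

lemma aux_re_pos {w : ℂ} (h : w ∈ Complex.slitPlane) : 0 < (w ^ ((1:ℂ)/2)).re := by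
  have hw0 : w ≠ 0 := Complex.slitPlane_ne_zero h
  rw [Complex.cpow_def_of_ne_zero hw0, Complex.exp_re]
  apply mul_pos (Real.exp_pos _)
  apply Real.cos_pos_of_mem_Ioo
  have him : (Complex.log w * ((1:ℂ)/2)).im = w.arg / 2 := by
    simp [Complex.mul_im, Complex.log_im]
    ring
  rw [him]
  have h1 : -Real.pi < w.arg := Complex.neg_pi_lt_arg w
  have h2 : w.arg ≤ Real.pi := Complex.arg_le_pi w
  have h3 : w.arg ≠ Real.pi := Complex.slitPlane_arg_ne_pi h
  have h4 : w.arg < Real.pi := lt_of_le_of_ne h2 h3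
  constructor <;> linarith

lemma aux_sq (w : ℂ) : (w ^ ((1:ℂ)/2)) ^ 2 = w := by
  rw [show ((1:ℂ)/2) = (((2:ℕ)):ℂ)⁻¹ by norm_num]
  exact Complex.cpow_nat_inv_pow w two_ne_zero

lemma slit_aux (a : ℝ) (u : ℂ) (hu : 0 < u.im) (t : ℝ) (ht : a - u.im^2/2 < t) :
    (2*((t:ℂ) - a) - u^2) ∈ Complex.slitPlane := by
  rw [Complex.mem_slitPlane_iff]
  by_cases hre : u.re = 0
  · left
    simp [Complex.sub_re, Complex.mul_re, pow_two, hre]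
    nlinarith
  · right
    simp [Complex.sub_im, Complex.mul_im, pow_two]
    intro h
    have h' : u.re * u.im = 0 := by linarith
    rcases mul_eq_zero.1 h' with h' | h' <;> [exact hre h'; linarith]


lemma B_deriv (a : ℝ) (u : ℂ) (hu : 0 < u.im) (t : ℝ) (ht : a - u.im^2/2 < t) :
    HasDerivAt (fun s : ℝ => Complex.I * ((2*((s:ℂ) - a) - u^2) ^ ((1:ℂ)/2)))
      (-(Complex.I * ((2*((t:ℂ) - a) - u^2) ^ ((1:ℂ)/2)))⁻¹) t := by
  have hw := slit_aux a u hu t ht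
  have hw0 : (2*((t:ℂ) - a) - u^2) ≠ 0 := Complex.slitPlane_ne_zero hw
  have h0 : HasDerivAt (fun s : ℝ => (s:ℂ)) 1 t := by
    exact (hasDerivAt_id t).ofReal_comp
  have h1 : HasDerivAt (fun s : ℝ => (2*((s:ℂ) - a) - u^2)) 2 t := by
    simpa using ((h0.sub_const (a:ℂ)).const_mul (2:ℂ)).sub_const (u^2)
  have h2 := (((Complex.hasStrictDerivAt_cpow_const (c := (1:ℂ)/2) hw).hasDerivAt.comp t h1).const_mul Complex.I)
  convert h2 using 1
  · rfl
  · rfl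
  have hs : (2*((t:ℂ) - a) - u^2) ^ ((1:ℂ)/2) ≠ 0 := by
    intro h
    have := aux_sq (2*((t:ℂ) - a) - u^2)
    rw [h] at this
    simp at this
    exact hw0 this.symm
  rw [show ((1:ℂ)/2 - 1) = -((1:ℂ)/2) by ring, Complex.cpow_neg]
  field_simp
  linear_combination (-1 : ℂ) * Complex.I_sq

lemma B_im_pos (a : ℝ) (u : ℂ) (hu : 0 < u.im) (t : ℝ) (ht : a - u.im^2/2 < t) :
    0 < (Complex.I * ((2*((t:ℂ) - a) - u^2) ^ ((1:ℂ)/2))).im := by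
  have := aux_re_pos (slit_aux a u hu t ht)
  simpa [Complex.mul_im] using this

lemma B_at_a (a : ℝ) (u : ℂ) (hu : 0 < u.im) :
    Complex.I * ((2*((a:ℂ) - a) - u^2) ^ ((1:ℂ)/2)) = u := by
  have hw : (2*((a:ℂ) - a) - u^2) ∈ Complex.slitPlane :=
    slit_aux a u hu a (by nlinarith [mul_pos hu hu])
  set s := (2*((a:ℂ) - a) - u^2) ^ ((1:ℂ)/2) with hs
  have hsq : s^2 = 2*((a:ℂ) - a) - u^2 := aux_sq _
  have hre : 0 < s.re := aux_re_pos hw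
  have hfac : (s - (-Complex.I * u)) * (s + (-Complex.I * u)) = 0 := by
    have hI : Complex.I^2 = -1 := Complex.I_sq
    calc (s - (-Complex.I * u)) * (s + (-Complex.I * u))
        = s^2 - Complex.I^2 * u^2 := by ring
      _ = 0 := by rw [hsq, hI]; ring
  rcases mul_eq_zero.1 hfac with h | h
  · have h' : s = -Complex.I * u := by linear_combination h
    rw [h']
    have hI : Complex.I * Complex.I = -1 := Complex.I_mul_I
    calc Complex.I * (-Complex.I * u) = -(Complex.I * Complex.I) * u := by ring
      _ = u := by rw [hI]; ring
  · exfalso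
    have h' : s = Complex.I * u := by linear_combination h
    have : s.re = -u.im := by rw [h']; simp [Complex.mul_re]
    linarith
open Complex ComplexConjugate Set


theorem stmt9 (a : ℝ) (ha : 0 ≤ a) (B : ℝ → ℂ → ℂ)
    (hB : ∀ (t : ℝ) (z : ℂ),
      B t z = Complex.I * ((2 * ((t : ℂ) - (a : ℂ)) - z ^ 2) ^ ((1 : ℂ) / 2)))
    (z α : ℂ) (hz : 0 < z.im) (hα : 0 < α.im) (b : ℝ) (hb : a ≤ b) :
    Complex.exp (∫ t in a..b, 1 / (conj (B t α) * B t z)) =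
      (B b z - conj (B b α)) / (z - conj α) := by
  set δ : ℝ := min (z.im^2) (α.im^2) / 2 with hδdef
  have hδ : 0 < δ := by
    have := mul_pos hz hz
    have := mul_pos hα hα
    apply div_pos _ two_pos
    apply lt_min <;> nlinarith
  set U : Set ℝ := Ioi (a - δ) with hU
  have hUopen : IsOpen U := isOpen_Ioi
  have hIccU : Icc a b ⊆ U := fun t hti => lt_of_lt_of_le (by linarith) hti.1
  have htz : ∀ t ∈ U, a - z.im^2/2 < t := fun t hti => by
    have h1 : δ ≤ z.im^2/2 := by
      have := min_le_left (z.im^2) (α.im^2); rw [hδdef]; linarith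
    exact lt_of_le_of_lt (by linarith) hti
  have htα : ∀ t ∈ U, a - α.im^2/2 < t := fun t hti => by
    have h1 : δ ≤ α.im^2/2 := by
      have := min_le_right (z.im^2) (α.im^2); rw [hδdef]; linarith
    exact lt_of_le_of_lt (by linarith) hti
  -- derivatives of B
  have hBz : ∀ t ∈ U, HasDerivAt (fun s => B s z) (-(B t z)⁻¹) t := by
    intro t hti
    have heq : (fun s => B s z) = fun s : ℝ => Complex.I * ((2*((s:ℂ) - a) - z^2) ^ ((1:ℂ)/2)) :=
      funext fun s => hB s z
    rw [heq, hB t z]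
    exact B_deriv a z hz t (htz t hti)
  have hBα : ∀ t ∈ U, HasDerivAt (fun s => B s α) (-(B t α)⁻¹) t := by
    intro t hti
    have heq : (fun s => B s α) = fun s : ℝ => Complex.I * ((2*((s:ℂ) - a) - α^2) ^ ((1:ℂ)/2)) :=
      funext fun s => hB s α
    rw [heq, hB t α]
    exact B_deriv a α hα t (htα t hti)
  have hBzpos : ∀ t ∈ U, 0 < (B t z).im := fun t hti => by
    rw [hB t z]; exact B_im_pos a z hz t (htz t hti)
  have hBαpos : ∀ t ∈ U, 0 < (B t α).im := fun t hti => by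
    rw [hB t α]; exact B_im_pos a α hα t (htα t hti)
  have hBzne : ∀ t ∈ U, B t z ≠ 0 := fun t hti h => by
    have := hBzpos t hti; rw [h] at this; simp at this
  have hBαne : ∀ t ∈ U, conj (B t α) ≠ 0 := fun t hti h => by
    have hpos := hBαpos t hti
    have h0 : B t α = 0 := by simpa using congrArg (starRingEnd ℂ) h
    rw [h0] at hpos
    simp at hpos
  -- conj derivative
  have hBαconj : ∀ t ∈ U, HasDerivAt (fun s => conj (B s α)) (conj (-(B t α)⁻¹)) t := by
    intro t hti
    exact (hBα t hti).star
  set h : ℝ → ℂ := fun t => 1 / (conj (B t α) * B t z) with hh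
  have hcont : ∀ t ∈ U, ContinuousAt h t := by
    intro t hti
    apply ContinuousAt.div continuousAt_const
    · exact ((hBαconj t hti).continuousAt).mul ((hBz t hti).continuousAt)
    · exact mul_ne_zero (hBαne t hti) (hBzne t hti)
  have hint : ∀ r ∈ Icc a b, IntervalIntegrable h MeasureTheory.volume a r := by
    intro r hri
    apply ContinuousOn.intervalIntegrable
    intro s hsi
    have : s ∈ Icc a b := by
      rcases hsi with ⟨h1, h2⟩
      simp only [min_le_iff, le_max_iff] at h1 h2
      constructor
      · rcases h1 with h1 | h1; · linarith
        linarith [hri.1]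
      · rcases h2 with h2 | h2; · linarith
        linarith [hri.2]
    exact (hcont s (hIccU this)).continuousWithinAt
  set F : ℝ → ℂ := fun t => ∫ s in a..t, h s with hF
  have hFd : ∀ t ∈ Icc a b, HasDerivAt F (h t) t := by
    intro t hti
    exact intervalIntegral.integral_hasDerivAt_right (hint t hti)
      (ContinuousAt.stronglyMeasurableAtFilter hUopen hcont t (hIccU hti))
      (hcont t (hIccU hti))
  set G : ℝ → ℂ := fun t => (B t z - conj (B t α)) * Complex.exp (-F t) with hG
  have hGd : ∀ t ∈ Icc a b, HasDerivAt G 0 t := by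
    intro t hti
    have htU := hIccU hti
    have hexp : HasDerivAt (fun s => Complex.exp (-F s)) (Complex.exp (-F t) * (-h t)) t :=
      ((hFd t hti).neg).cexp
    have hmul := ((hBz t htU).sub (hBαconj t htU)).mul hexp
    convert hmul using 1
    · rfl
    · rfl
    have hq := hBαne t htU
    have hp := hBzne t htU
    rw [hh]
    simp only [map_neg, map_inv₀]
    field_simp
    simp only [Pi.sub_apply]
    ring
  have hconst : G b = G a := by
    have hcont' : ContinuousOn G (Icc a b) := fun t hti =>
      ((hGd t hti).continuousAt).continuousWithinAt
    have := constant_of_has_deriv_right_zero hcont'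
      (fun x hx => ((hGd x (Ico_subset_Icc_self hx)).hasDerivWithinAt))
    exact this b (right_mem_Icc.2 hb)
  have hFa : F a = 0 := intervalIntegral.integral_same
  have hBaz : B a z = z := by rw [hB a z]; exact B_at_a a z hz
  have hBaα : B a α = α := by rw [hB a α]; exact B_at_a a α hα
  have hGa : G a = z - conj α := by
    rw [hG]; simp only [hFa, hBaz, hBaα, neg_zero, Complex.exp_zero, mul_one]
  have hne : z - conj α ≠ 0 := by
    intro h'
    have : (z - conj α).im = 0 := by rw [h']; simp
    simp [Complex.sub_im, Complex.conj_im] at this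
    linarith
  have hGb : (B b z - conj (B b α)) * Complex.exp (-F b) = z - conj α := hconst.trans hGa
  have hFb : (∫ t in a..b, 1 / (conj (B t α) * B t z)) = F b := rfl
  rw [hFb, eq_div_iff hne, ← hGb, Complex.exp_neg]
  have hEne : Complex.exp (F b) ≠ 0 := Complex.exp_ne_zero _
  field_simp
end
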